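/- Let G be a finite connected weighted graph with N ≥ 3 vertices and let (τ_{ij}) be its coalescence times. Then the strict inequalities τ^{(1)} + τ^{(2)} > τ^{(3)} and τ^{(2)} + τ^{(3)} > τ^{(1)} hold; consequently the structure coefficient σ = (−τ^{(1)} + τ^{(2)} + τ^{(3)})/(τ^{(1)} + τ^{(2)} − τ^{(3)}) is well defined and positive, and τ^{(2)} > |τ^{(3)} − τ^{(1)}| (so that whenever τ^{(3)} ≠ τ^{(1)}, the critical benefit-to-cost ratio (b/c)* = τ^{(2)}/(τ^{(3)} − τ^{(1)}) satisfies |(b/c)*| > 1). -/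

import Mathlib

open Finset Filter Asymptotics

noncomputable section

namespace EvoGraph

variable {V : Type*} [Fintype V] [DecidableEq V]

/-- Weighted degree `w_i = ∑_j w_{ij}`. -/
def deg (w : V → V → ℝ) (i : V) : ℝ := ∑ j, w i j

/-- Total edge weight `W = ∑_i w_i`. -/
def Wtot (w : V → V → ℝ) : ℝ := ∑ i, deg w i

/-- Random-walk step probability `p_{ij} = w_{ij}/w_i`. -/
def step (w : V → V → ℝ) (i j : V) : ℝ := w i j / deg w i

/-- The stochastic matrix `(p_{ij})`. -/
def stepMat (w : V → V → ℝ) : Matrix V V ℝ := Matrix.of fun i j => step w i j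

/-- `n`-step probability `p^{(n)}_{ij}`: the `(i,j)` entry of the `n`-th power of `(p_{ij})`. -/
def stepN (w : V → V → ℝ) (n : ℕ) (i j : V) : ℝ := (stepMat w ^ n) i j

/-- Stationary distribution `π_i = w_i / W`. -/
def statDist (w : V → V → ℝ) (i : V) : ℝ := deg w i / Wtot w

/-- `w` is a finite connected weighted graph: symmetric nonnegative weights
(self-loops allowed), positive weighted degrees, and any two vertices joined by
a path of edges of positive weight. -/
def IsWeightedGraph (w : V → V → ℝ) : Prop :=
  (∀ i j, w i j = w j i) ∧ (∀ i j, 0 ≤ w i j) ∧ (∀ i, 0 < deg w i) ∧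
  ∀ i j : V, Relation.ReflTransGen (fun a b => 0 < w a b) i j

/-- `τ` is the (symmetric) solution of the coalescence-time system:
`τ_{ii} = 0`, and `τ_{ij} = 1 + (1/2) ∑_k (p_{ik} τ_{kj} + p_{jk} τ_{ik})` for `i ≠ j`. -/
def IsCoalescent (w : V → V → ℝ) (τ : V → V → ℝ) : Prop :=
  (∀ i j, τ i j = τ j i) ∧ (∀ i, τ i i = 0) ∧
  ∀ i j, i ≠ j →
    τ i j = 1 + (1 / 2) * ∑ k, (step w i k * τ k j + step w j k * τ i k)

/-- `τ^{(n)} = ∑_{i,j} π_i p^{(n)}_{ij} τ_{ij}`. -/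
def tauWalk (w τ : V → V → ℝ) (n : ℕ) : ℝ :=
  ∑ i, ∑ j, statDist w i * stepN w n i j * τ i j

/-- Remeeting time `τ⁺_i = 1 + ∑_j p_{ij} τ_{ij}`. -/
def remeet (w τ : V → V → ℝ) (i : V) : ℝ := 1 + ∑ j, step w i j * τ i j

/-!
Write `A(M) = ∑ i, π_i M_ii τ⁺_i` (`remeetWeight`). The coalescence recurrence also holds on the
diagonal in the form `τ_ij = 1 + ½ ∑_k (p_ik τ_kj + p_jk τ_ik) - δ_ij τ⁺_i`. Pairing it with
`π_i p⁽ⁿ⁾_ij` and using reversibility gives `τ⁽ⁿ⁺¹⁾ = τ⁽ⁿ⁾ + A(Pⁿ) - 1`; pairing it with `π_i π_j`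
gives Kac's formula `A(diag π) = 1`. Hence `τ⁽¹⁾ + τ⁽²⁾ - τ⁽³⁾ = A(I - P²)` and
`τ⁽²⁾ + τ⁽³⁾ - τ⁽¹⁾ = A((I + P)² - 4 diag π)`. Since `τ⁺ ≥ 1`, both are positive once the diagonals
are nonnegative and somewhere positive: `p⁽²⁾_ii ≤ 1`, with strict inequality at an endpoint of an
edge that is not a whole component; and `4 π_i ≤ ((I + P)²)_ii` is Cauchy–Schwarz against `π` for
the reversible matrix `I + P`, strict wherever `π_i < 1/2`.
-/

end EvoGraph

namespace EvoGraph

open Matrix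

variable {V : Type*} [Fintype V] {w τ : V → V → ℝ}

section RandomWalk

theorem IsWeightedGraph.deg_pos (hG : IsWeightedGraph w) (i : V) : 0 < deg w i :=
  hG.2.2.1 i

theorem IsWeightedGraph.step_nonneg (hG : IsWeightedGraph w) (i j : V) : 0 ≤ step w i j :=
  div_nonneg (hG.2.1 i j) (hG.deg_pos i).le

theorem IsWeightedGraph.sum_step (hG : IsWeightedGraph w) (i : V) : ∑ j, step w i j = 1 := by
  simp only [step, ← sum_div]
  exact div_self (hG.deg_pos i).ne'

theorem IsWeightedGraph.Wtot_pos (hG : IsWeightedGraph w) (i : V) : 0 < Wtot w :=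
  (hG.deg_pos i).trans_le <| single_le_sum (fun j _ => (hG.deg_pos j).le) (mem_univ i)

theorem IsWeightedGraph.statDist_pos (hG : IsWeightedGraph w) (i : V) : 0 < statDist w i :=
  div_pos (hG.deg_pos i) (hG.Wtot_pos i)

theorem IsWeightedGraph.sum_statDist [Nonempty V] (hG : IsWeightedGraph w) :
    ∑ i, statDist w i = 1 := by
  simp only [statDist, ← sum_div]
  exact div_self (hG.Wtot_pos (Classical.arbitrary V)).ne'

theorem IsWeightedGraph.statDist_mul_step (hG : IsWeightedGraph w) (i j : V) :
    statDist w i * step w i j = statDist w j * step w j i := by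
  have := hG.deg_pos i
  have := hG.deg_pos j
  simp only [statDist, step]
  field_simp
  rw [hG.1 i j]

theorem IsWeightedGraph.statDist_vecMul_stepMat (hG : IsWeightedGraph w) :
    statDist w ᵥ* stepMat w = statDist w := by
  ext j
  simp only [vecMul, dotProduct, stepMat, of_apply, hG.statDist_mul_step _ j, ← mul_sum,
    hG.sum_step, mul_one]

variable [DecidableEq V]

theorem IsWeightedGraph.transpose_stepMat_mul_diagonal (hG : IsWeightedGraph w) :
    (stepMat w)ᵀ * diagonal (statDist w) = diagonal (statDist w) * stepMat w := by
  ext i j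
  simp only [mul_diagonal, diagonal_mul, transpose_apply, stepMat, of_apply]
  rw [mul_comm, hG.statDist_mul_step]

theorem IsWeightedGraph.stepMat_mem_rowStochastic (hG : IsWeightedGraph w) :
    stepMat w ∈ rowStochastic ℝ V :=
  mem_rowStochastic_iff_sum.2 ⟨hG.step_nonneg, hG.sum_step⟩

theorem IsWeightedGraph.stepMat_pow_mem_rowStochastic (hG : IsWeightedGraph w) (n : ℕ) :
    stepMat w ^ n ∈ rowStochastic ℝ V :=
  pow_mem hG.stepMat_mem_rowStochastic n

end RandomWalk

section Coalescence

theorem IsCoalescent.nonneg (hG : IsWeightedGraph w) (hτ : IsCoalescent w τ) (i j : V) :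
    0 ≤ τ i j := by
  have : Nonempty V := ⟨i⟩
  obtain ⟨⟨a, b⟩, hmin⟩ := Finite.exists_min fun p : V × V => τ p.1 p.2
  rcases eq_or_ne a b with rfl | hab
  · simpa [hτ.2.1] using hmin (i, j)
  -- at a minimum off the diagonal the recurrence would give `τ a b ≥ 1 + τ a b`
  have hmean : τ a b + τ a b ≤ ∑ k, (step w a k * τ k b + step w b k * τ a k) :=
    calc τ a b + τ a b = ∑ k, (step w a k * τ a b + step w b k * τ a b) := by
          rw [sum_add_distrib, ← sum_mul, ← sum_mul, hG.sum_step, hG.sum_step, one_mul]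
      _ ≤ _ := sum_le_sum fun k _ => add_le_add
          (mul_le_mul_of_nonneg_left (hmin (k, b)) (hG.step_nonneg a k))
          (mul_le_mul_of_nonneg_left (hmin (a, k)) (hG.step_nonneg b k))
  linarith [hτ.2.2 a b hab]

theorem IsCoalescent.one_le_remeet (hG : IsWeightedGraph w) (hτ : IsCoalescent w τ) (i : V) :
    1 ≤ remeet w τ i :=
  le_add_of_nonneg_right <| sum_nonneg fun j _ =>
    mul_nonneg (hG.step_nonneg i j) (hτ.nonneg hG i j)

variable [DecidableEq V]

theorem IsCoalescent.eq_sub_ite (hτ : IsCoalescent w τ) (i j : V) :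
    τ i j = 1 + 1 / 2 * ∑ k, (step w i k * τ k j + step w j k * τ i k) -
      if i = j then remeet w τ i else 0 := by
  rcases eq_or_ne i j with rfl | hij
  · have hsymm : ∀ k, step w i k * τ k i + step w i k * τ i k = 2 * (step w i k * τ i k) :=
      fun k => by rw [hτ.1 k i]; ring
    simp only [hτ.2.1, hsymm, ← mul_sum, if_true, remeet]
    ring
  · rw [if_neg hij, hτ.2.2 i j hij, sub_zero]

theorem IsCoalescent.sum_mul_eq (hτ : IsCoalescent w τ) {C C' : Matrix V V ℝ}
    (hl : (stepMat w)ᵀ * C = C') (hr : C * stepMat w = C') :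
    ∑ i, ∑ j, C i j * τ i j =
      ∑ i, ∑ j, C i j + ∑ i, ∑ j, C' i j * τ i j - ∑ i, C i i * remeet w τ i := by
  have hleft : ∑ i, ∑ j, C i j * ∑ k, step w i k * τ k j = ∑ i, ∑ j, C' i j * τ i j := by
    rw [← hl, sum_comm]
    simp only [mul_apply, transpose_apply, stepMat, of_apply, mul_sum, sum_mul]
    rw [sum_congr rfl fun _ _ => sum_comm, sum_comm]
    exact sum_congr rfl fun _ _ => sum_congr rfl fun _ _ => sum_congr rfl fun _ _ => by ring
  have hright : ∑ i, ∑ j, C i j * ∑ k, step w j k * τ i k = ∑ i, ∑ j, C' i j * τ i j := by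
    rw [← hr]
    simp only [mul_apply, stepMat, of_apply, mul_sum, sum_mul]
    exact sum_congr rfl fun _ _ => sum_comm.trans <|
      sum_congr rfl fun _ _ => sum_congr rfl fun _ _ => by ring
  have hdiag : ∑ i, ∑ j, C i j * (if i = j then remeet w τ i else 0) =
      ∑ i, C i i * remeet w τ i := by
    simp only [mul_ite, mul_zero, sum_ite_eq, mem_univ, if_true]
  calc ∑ i, ∑ j, C i j * τ i j
      = ∑ i, ∑ j, (C i j + 1 / 2 * (C i j * ∑ k, step w i k * τ k j) +
          1 / 2 * (C i j * ∑ k, step w j k * τ i k) -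
          C i j * if i = j then remeet w τ i else 0) := by
        refine sum_congr rfl fun i _ => sum_congr rfl fun j _ => ?_
        rw [hτ.eq_sub_ite i j, sum_add_distrib]
        ring
    _ = _ := by
        simp only [sum_add_distrib, sum_sub_distrib, ← mul_sum, hleft, hright, hdiag]
        ring

end Coalescence

section TauWalk

def remeetWeight (w τ : V → V → ℝ) : Matrix V V ℝ →ₗ[ℝ] ℝ where
  toFun M := ∑ i, statDist w i * M i i * remeet w τ i
  map_add' M N := by simp only [Matrix.add_apply, mul_add, add_mul, sum_add_distrib]
  map_smul' c M := by
    simp only [Matrix.smul_apply, smul_eq_mul, RingHom.id_apply, mul_sum]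
    exact sum_congr rfl fun _ _ => by ring

theorem remeetWeight_apply (M : Matrix V V ℝ) :
    remeetWeight w τ M = ∑ i, statDist w i * M i i * remeet w τ i :=
  rfl

theorem remeetWeight_pos (hG : IsWeightedGraph w) (hτ : IsCoalescent w τ) {M : Matrix V V ℝ}
    (hM : ∀ i, 0 ≤ M i i) (hpos : ∃ i, 0 < M i i) : 0 < remeetWeight w τ M := by
  have hrem : ∀ i, 0 < remeet w τ i := fun i => one_pos.trans_le (hτ.one_le_remeet hG i)
  obtain ⟨i, hi⟩ := hpos
  exact sum_pos' (fun j _ => mul_nonneg (mul_nonneg (hG.statDist_pos j).le (hM j)) (hrem j).le)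
    ⟨i, mem_univ i, mul_pos (mul_pos (hG.statDist_pos i) hi) (hrem i)⟩

variable [DecidableEq V]

theorem IsCoalescent.tauWalk_zero (hτ : IsCoalescent w τ) : tauWalk w τ 0 = 0 := by
  simp [tauWalk, stepN, one_apply, hτ.2.1]

theorem IsCoalescent.tauWalk_succ [Nonempty V] (hG : IsWeightedGraph w) (hτ : IsCoalescent w τ)
    (n : ℕ) : tauWalk w τ (n + 1) = tauWalk w τ n + remeetWeight w τ (stepMat w ^ n) - 1 := by
  have hl : (stepMat w)ᵀ * (diagonal (statDist w) * stepMat w ^ n) =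
      diagonal (statDist w) * stepMat w ^ (n + 1) := by
    rw [← Matrix.mul_assoc, hG.transpose_stepMat_mul_diagonal, Matrix.mul_assoc, pow_succ']
  have hr : diagonal (statDist w) * stepMat w ^ n * stepMat w =
      diagonal (statDist w) * stepMat w ^ (n + 1) := by
    rw [Matrix.mul_assoc, pow_succ]
  have hmass : ∑ i, ∑ j, (diagonal (statDist w) * stepMat w ^ n) i j = 1 := by
    simp only [diagonal_mul, ← mul_sum,
      sum_row_of_mem_rowStochastic (hG.stepMat_pow_mem_rowStochastic n), mul_one, hG.sum_statDist]
  have := hτ.sum_mul_eq hl hr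
  rw [hmass] at this
  simp only [diagonal_mul] at this
  simp only [tauWalk, stepN, remeetWeight_apply]
  linarith

/-- Kac's formula `∑ i, π_i ^ 2 * τ⁺_i = 1`. -/
theorem IsCoalescent.remeetWeight_diagonal_statDist [Nonempty V] (hG : IsWeightedGraph w)
    (hτ : IsCoalescent w τ) : remeetWeight w τ (diagonal (statDist w)) = 1 := by
  have hl : (stepMat w)ᵀ * vecMulVec (statDist w) (statDist w) =
      vecMulVec (statDist w) (statDist w) := by
    rw [mul_vecMulVec, mulVec_transpose, hG.statDist_vecMul_stepMat]
  have hr : vecMulVec (statDist w) (statDist w) * stepMat w =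
      vecMulVec (statDist w) (statDist w) := by
    rw [vecMulVec_mul, hG.statDist_vecMul_stepMat]
  have hmass : ∑ i, ∑ j, vecMulVec (statDist w) (statDist w) i j = 1 := by
    simp only [vecMulVec_apply, ← sum_mul_sum, hG.sum_statDist, mul_one]
  have := hτ.sum_mul_eq hl hr
  rw [hmass] at this
  simp only [vecMulVec_apply] at this
  simp only [remeetWeight_apply, diagonal_apply_eq]
  linarith

theorem IsCoalescent.tauWalk_one_add_two_sub_three [Nonempty V] (hG : IsWeightedGraph w)
    (hτ : IsCoalescent w τ) :
    tauWalk w τ 1 + tauWalk w τ 2 - tauWalk w τ 3 = remeetWeight w τ (1 - stepMat w ^ 2) := by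
  have h1 := hτ.tauWalk_succ hG 1
  have h2 := hτ.tauWalk_succ hG 2
  have h0 := hτ.tauWalk_succ hG 0
  rw [hτ.tauWalk_zero, pow_zero] at h0
  rw [map_sub]
  linarith

theorem IsCoalescent.tauWalk_two_add_three_sub_one [Nonempty V] (hG : IsWeightedGraph w)
    (hτ : IsCoalescent w τ) :
    tauWalk w τ 2 + tauWalk w τ 3 - tauWalk w τ 1 = remeetWeight w τ
      (1 + (2 : ℝ) • stepMat w + stepMat w ^ 2 - (4 : ℝ) • diagonal (statDist w)) := by
  have h1 := hτ.tauWalk_succ hG 1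
  have h2 := hτ.tauWalk_succ hG 2
  have h0 := hτ.tauWalk_succ hG 0
  rw [hτ.tauWalk_zero, pow_zero] at h0
  rw [pow_one] at h1
  simp only [map_sub, map_add, map_smul, hτ.remeetWeight_diagonal_statDist hG, smul_eq_mul]
  linarith

end TauWalk

section Inequalities

theorem mul_sum_sq_div_eq_of_reversible {π : V → ℝ} {M : Matrix V V ℝ} {c : ℝ}
    (hπ : ∀ k, π k ≠ 0) (hsum : ∑ k, π k = 1) (hrev : ∀ i k, π i * M i k = π k * M k i)
    (hrow : ∀ i, ∑ k, M i k = c) (i : V) :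
    π i * ∑ k, (M i k - c * π k) ^ 2 / π k = (M * M) i i - c ^ 2 * π i := by
  have hterm : ∀ k, π i * ((M i k - c * π k) ^ 2 / π k) =
      M i k * M k i - 2 * c * (π i * M i k) + c ^ 2 * π i * π k := fun k => by
    field_simp [hπ k]
    linear_combination M i k * hrev i k
  rw [mul_sum, sum_congr rfl fun k _ => hterm k, sum_add_distrib, sum_sub_distrib, ← mul_sum,
    ← mul_sum, ← mul_sum, hrow, hsum, mul_apply]
  ring

theorem IsWeightedGraph.exists_statDist_lt_half (hG : IsWeightedGraph w)
    (hN : 3 ≤ Fintype.card V) : ∃ i, statDist w i < 1 / 2 := by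
  have : Nonempty V := Fintype.card_pos_iff.mp (by omega)
  have hcard : (3 : ℝ) ≤ Fintype.card V := by exact_mod_cast hN
  obtain ⟨i, -, hi⟩ := exists_lt_of_sum_lt (s := univ) (f := statDist w) (g := fun _ => 1 / 2)
    (by rw [hG.sum_statDist, sum_const, card_univ, nsmul_eq_mul]; linarith)
  exact ⟨i, hi⟩

theorem IsWeightedGraph.step_lt_one_of_pos (hG : IsWeightedGraph w) {i j l : V} (hl : l ≠ j)
    (h : 0 < w i l) : step w i j < 1 := by
  classical
  rw [step, div_lt_one (hG.deg_pos i)]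
  calc w i j < w i j + w i l := lt_add_of_pos_right _ h
    _ = ∑ k ∈ {j, l}, w i k := (sum_pair hl.symm).symm
    _ ≤ deg w i := sum_le_sum_of_subset_of_nonneg (subset_univ _) fun k _ _ => hG.2.1 i k

theorem IsWeightedGraph.mem_of_adj_closed (hG : IsWeightedGraph w) {S : Set V} {a : V}
    (ha : a ∈ S) (hS : ∀ x ∈ S, ∀ y, 0 < w x y → y ∈ S) (y : V) : y ∈ S := by
  induction hG.2.2.2 a y with
  | refl => exact ha
  | tail _ hxy ih => exact hS _ ih _ hxy

theorem IsWeightedGraph.exists_step_pos_step_lt_one (hG : IsWeightedGraph w)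
    (hN : 3 ≤ Fintype.card V) : ∃ a b, 0 < step w a b ∧ step w b a < 1 := by
  by_contra! h
  -- otherwise a neighbour `b` of `a` has no neighbour but `a`, and `{a, b}` is a component
  have hsole : ∀ a b, 0 < w a b → ∀ l, 0 < w b l → l = a := fun a b hab l hbl => by
    by_contra hla
    exact (h a b (div_pos hab (hG.deg_pos a))).not_gt (hG.step_lt_one_of_pos hla hbl)
  obtain ⟨a, y, z, hay, haz, hyz⟩ := Fintype.two_lt_card_iff.1 hN
  obtain ⟨b, -, hab⟩ := exists_lt_of_sum_lt (s := univ) (f := fun _ => (0 : ℝ)) (g := w a)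
    (by rw [sum_const_zero]; exact hG.deg_pos a)
  have hba : 0 < w b a := hG.1 a b ▸ hab
  have hmem : ∀ v, v ∈ ({a, b} : Set V) := by
    refine hG.mem_of_adj_closed (Set.mem_insert a _) ?_
    rintro x (rfl | rfl) v hxv
    · exact Or.inr (hsole b x hba v hxv)
    · exact Or.inl (hsole a x hab v hxv)
  have hy := (hmem y).resolve_left hay.symm
  have hz := (hmem z).resolve_left haz.symm
  exact hyz (hy.trans hz.symm)

variable [DecidableEq V]

theorem IsWeightedGraph.exists_stepMat_sq_lt_one (hG : IsWeightedGraph w)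
    (hN : 3 ≤ Fintype.card V) : ∃ i, (stepMat w ^ 2) i i < 1 := by
  obtain ⟨a, b, hab, hba⟩ := hG.exists_step_pos_step_lt_one hN
  refine ⟨a, ?_⟩
  rw [sq, mul_apply, ← hG.sum_step a]
  exact sum_lt_sum (fun k _ => mul_le_of_le_one_right (hG.step_nonneg a k)
      (le_one_of_mem_rowStochastic hG.stepMat_mem_rowStochastic))
    ⟨b, mem_univ b, mul_lt_of_lt_one_right hab hba⟩

theorem IsWeightedGraph.statDist_mul_sum_sq_div [Nonempty V] (hG : IsWeightedGraph w) (i : V) :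
    statDist w i * ∑ k, ((1 + stepMat w) i k - 2 * statDist w k) ^ 2 / statDist w k =
      1 + 2 * step w i i + (stepMat w ^ 2) i i - 4 * statDist w i := by
  have hrev : ∀ a b, statDist w a * (1 + stepMat w) a b = statDist w b * (1 + stepMat w) b a := by
    intro a b
    rcases eq_or_ne a b with rfl | hab
    · rfl
    · simp only [Matrix.add_apply, one_apply_ne hab, one_apply_ne hab.symm, zero_add, stepMat,
        of_apply, hG.statDist_mul_step a b]
  have hrow : ∀ a, ∑ b, (1 + stepMat w) a b = 2 := fun a => by
    simp only [Matrix.add_apply, sum_add_distrib, one_apply, sum_ite_eq, mem_univ, if_true,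
      stepMat, of_apply, hG.sum_step]
    norm_num
  rw [mul_sum_sq_div_eq_of_reversible (fun k => (hG.statDist_pos k).ne') hG.sum_statDist hrev hrow]
  simp only [add_mul, mul_add, Matrix.mul_one, Matrix.one_mul, Matrix.add_apply, one_apply_eq, sq,
    stepMat, of_apply]
  ring

theorem IsWeightedGraph.four_mul_statDist_le [Nonempty V] (hG : IsWeightedGraph w) (i : V) :
    4 * statDist w i ≤ 1 + 2 * step w i i + (stepMat w ^ 2) i i := by
  have := hG.statDist_mul_sum_sq_div i
  have : 0 ≤ statDist w i * ∑ k, ((1 + stepMat w) i k - 2 * statDist w k) ^ 2 / statDist w k :=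
    mul_nonneg (hG.statDist_pos i).le
      (sum_nonneg fun k _ => div_nonneg (sq_nonneg _) (hG.statDist_pos k).le)
  linarith

theorem IsWeightedGraph.four_mul_statDist_lt [Nonempty V] (hG : IsWeightedGraph w) {i : V}
    (hi : statDist w i < 1 / 2) : 4 * statDist w i < 1 + 2 * step w i i + (stepMat w ^ 2) i i := by
  have := hG.statDist_mul_sum_sq_div i
  have hii : 0 < (1 + stepMat w) i i - 2 * statDist w i := by
    simp only [Matrix.add_apply, one_apply_eq, stepMat, of_apply]
    linarith [hG.step_nonneg i i]
  have : 0 < statDist w i * ∑ k, ((1 + stepMat w) i k - 2 * statDist w k) ^ 2 / statDist w k :=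
    mul_pos (hG.statDist_pos i) <|
      sum_pos' (fun k _ => div_nonneg (sq_nonneg _) (hG.statDist_pos k).le)
        ⟨i, mem_univ i, div_pos (pow_pos hii 2) (hG.statDist_pos i)⟩
  linarith

end Inequalities

variable [DecidableEq V]

/-- for `N ≥ 3` the strict inequalities hold; consequently the
structure coefficient `σ` is well defined and positive, and
`τ^{(2)} > |τ^{(3)} − τ^{(1)}|`, so that `|(b/c)*| > 1` whenever `τ^{(3)} ≠ τ^{(1)}`. -/
theorem sigma_pos_and_bc_gt_one (w : V → V → ℝ) (hG : IsWeightedGraph w)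
    (hN : 3 ≤ Fintype.card V) (τ : V → V → ℝ) (hτ : IsCoalescent w τ) :
    tauWalk w τ 3 < tauWalk w τ 1 + tauWalk w τ 2 ∧
    tauWalk w τ 1 < tauWalk w τ 2 + tauWalk w τ 3 ∧
    0 < (-tauWalk w τ 1 + tauWalk w τ 2 + tauWalk w τ 3) /
        (tauWalk w τ 1 + tauWalk w τ 2 - tauWalk w τ 3) ∧
    |tauWalk w τ 3 - tauWalk w τ 1| < tauWalk w τ 2 ∧
    (tauWalk w τ 3 ≠ tauWalk w τ 1 →
      1 < |tauWalk w τ 2 / (tauWalk w τ 3 - tauWalk w τ 1)|) := by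
  have : Nonempty V := Fintype.card_pos_iff.mp (by omega)
  have hD1 : 0 < tauWalk w τ 1 + tauWalk w τ 2 - tauWalk w τ 3 := by
    rw [hτ.tauWalk_one_add_two_sub_three hG]
    refine remeetWeight_pos hG hτ (fun i => ?_) ?_
    · simpa using le_one_of_mem_rowStochastic (hG.stepMat_pow_mem_rowStochastic 2)
    · simpa using hG.exists_stepMat_sq_lt_one hN
  have hD2 : 0 < tauWalk w τ 2 + tauWalk w τ 3 - tauWalk w τ 1 := by
    rw [hτ.tauWalk_two_add_three_sub_one hG]
    refine remeetWeight_pos hG hτ (fun i => ?_) ?_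
    · simpa [stepMat] using hG.four_mul_statDist_le i
    · obtain ⟨i, hi⟩ := hG.exists_statDist_lt_half hN
      exact ⟨i, by simpa [stepMat] using hG.four_mul_statDist_lt hi⟩
  have habs : |tauWalk w τ 3 - tauWalk w τ 1| < tauWalk w τ 2 :=
    abs_sub_lt_iff.2 ⟨by linarith, by linarith⟩
  refine ⟨by linarith, by linarith, div_pos (by linarith) hD1, habs, fun hne => ?_⟩
  rw [abs_div, one_lt_div (abs_pos.2 (sub_ne_zero.2 hne))]
  exact habs.trans_le (le_abs_self _)

end EvoGraph
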